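/- arXiv:1202.2986 — 3 statements merged into one kernel-verified Lean document; each statement's English description precedes it below -/
import Mathlib

section
/- Let a ≥ 5 be an odd integer, and let G be the Grundy sequence of S({a, 2a + 1, 3a}). Then the game is ultimately bipartite; that is, there exist N ∈ ℕ and ε ∈ {0, 1} such that G(n) = (n + ε) mod 2 for all n ≥ N. -/
/-- The minimum excludant: the least natural number not in `X`. -/
noncomputable def mex (X : Set ℕ) : ℕ := sInf {m | m ∉ X}

/-- `G` is the Grundy (nim-value) sequence of the subtraction game with
subtraction set `S`: `G n = mex { G (n - s) : s ∈ S, s ≤ n }`. -/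
def IsGrundy (S : Finset ℕ) (G : ℕ → ℕ) : Prop :=
  ∀ n, G n = mex {v | ∃ s ∈ S, s ≤ n ∧ v = G (n - s)}

/-- The conjectured Grundy value as a function of the block `b = n / (4a+2)`
and remainder `r = n % (4a+2)`. -/
def fb (a b r : ℕ) : ℕ :=
  if 2*b+3 ≤ a ∧ r < a - 2*b then 0
  else if 2*b+3 ≤ a ∧ a ≤ r ∧ r < 2*a - 2*b then 1
  else if 2*b+3 ≤ a ∧ 2*a+1 ≤ r ∧ r < 3*a - 2*b then 2
  else if 2*b+3 ≤ a ∧ 3*a+1 ≤ r ∧ r < 4*a - 2*b then 3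
  else if 2*b+3 ≤ a ∧ r = 4*a+1 then 2
  else r % 2

lemma fb_eq0 {a b r : ℕ} (h1 : 2*b+3 ≤ a) (h2 : r < a - 2*b) : fb a b r = 0 := by
  unfold fb; rw [if_pos ⟨h1, h2⟩]

lemma fb_eq1 {a b r : ℕ} (h1 : 2*b+3 ≤ a) (h2 : a ≤ r) (h3 : r < 2*a - 2*b) : fb a b r = 1 := by
  unfold fb; rw [if_neg (by omega), if_pos ⟨h1, h2, h3⟩]

lemma fb_eq2 {a b r : ℕ} (h1 : 2*b+3 ≤ a) (h2 : 2*a+1 ≤ r) (h3 : r < 3*a - 2*b) : fb a b r = 2 := by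
  unfold fb; rw [if_neg (by omega), if_neg (by omega), if_pos ⟨h1, h2, h3⟩]

lemma fb_eq3 {a b r : ℕ} (h1 : 2*b+3 ≤ a) (h2 : 3*a+1 ≤ r) (h3 : r < 4*a - 2*b) : fb a b r = 3 := by
  unfold fb; rw [if_neg (by omega), if_neg (by omega), if_neg (by omega), if_pos ⟨h1, h2, h3⟩]

lemma fb_eq4 {a b r : ℕ} (h1 : 2*b+3 ≤ a) (h2 : r = 4*a+1) : fb a b r = 2 := by
  unfold fb
  rw [if_neg (by omega), if_neg (by omega), if_neg (by omega), if_neg (by omega), if_pos ⟨h1, h2⟩]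

lemma fb_eq5 {a b r : ℕ} (h1 : ¬(2*b+3 ≤ a ∧ r < a - 2*b))
    (h2 : ¬(2*b+3 ≤ a ∧ a ≤ r ∧ r < 2*a - 2*b))
    (h3 : ¬(2*b+3 ≤ a ∧ 2*a+1 ≤ r ∧ r < 3*a - 2*b))
    (h4 : ¬(2*b+3 ≤ a ∧ 3*a+1 ≤ r ∧ r < 4*a - 2*b))
    (h5 : ¬(2*b+3 ≤ a ∧ r = 4*a+1)) : fb a b r = r % 2 := by
  unfold fb; rw [if_neg h1, if_neg h2, if_neg h3, if_neg h4, if_neg h5]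

lemma mex_eq {X : Set ℕ} {v : ℕ} (h1 : v ∉ X) (h2 : ∀ m, m < v → m ∈ X) : mex X = v := by
  have hv : v ∈ {m | m ∉ X} := h1
  refine le_antisymm (Nat.sInf_le hv) ?_
  by_contra h
  push_neg at h
  exact Nat.sInf_mem (⟨v, hv⟩ : Set.Nonempty {m | m ∉ X}) (h2 _ h)

lemma mex_single {x t : ℕ} (h1 : x ≠ t) (h2 : 1 ≤ t → x = 0) (h3 : t ≤ 1) :
    mex ({x} : Set ℕ) = t := by
  apply mex_eq
  · simp only [Set.mem_singleton_iff]; omega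
  · intro m hm; simp only [Set.mem_singleton_iff]; omega

lemma mex_pair {x y t : ℕ} (h1 : x ≠ t ∧ y ≠ t) (h2 : 1 ≤ t → x = 0 ∨ y = 0)
    (h3 : 2 ≤ t → x = 1 ∨ y = 1) (h4 : t ≤ 2) :
    mex ({x, y} : Set ℕ) = t := by
  apply mex_eq
  · simp only [Set.mem_insert_iff, Set.mem_singleton_iff]; omega
  · intro m hm; simp only [Set.mem_insert_iff, Set.mem_singleton_iff]; omega

lemma mex_triple {x y z t : ℕ} (h1 : x ≠ t ∧ y ≠ t ∧ z ≠ t)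
    (h2 : 1 ≤ t → (x = 0 ∨ y = 0 ∨ z = 0))
    (h3 : 2 ≤ t → (x = 1 ∨ y = 1 ∨ z = 1))
    (h4 : 3 ≤ t → (x = 2 ∨ y = 2 ∨ z = 2))
    (h5 : t ≤ 3) :
    mex ({x, y, z} : Set ℕ) = t := by
  apply mex_eq
  · simp only [Set.mem_insert_iff, Set.mem_singleton_iff]; omega
  · intro m hm; simp only [Set.mem_insert_iff, Set.mem_singleton_iff]; omega
lemma step1 (a c r : ℕ) (ha : 5 ≤ a) (hodd : a % 2 = 1)
    (h2 : r < a) :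
    mex ({fb a (c) (r+3*a+2), fb a (c) (r+2*a+1), fb a (c) (r+a+2)} : Set ℕ) = fb a (c+1) (r) := by
  by_cases hc1 : 2*(c)+3 ≤ a ∧ 3*a+1 ≤ (r+3*a+2) ∧ (r+3*a+2) < 4*a - 2*(c)
  · -- hc1 true
    by_cases hc2 : 2*(c+1)+3 ≤ a ∧ (r) < a - 2*(c+1)
    · -- hc2 true
      have hx : fb a (c) (r+3*a+2) = 3 := fb_eq3 (by omega) (by omega) (by omega)
      have hy : fb a (c) (r+2*a+1) = 2 := fb_eq2 (by omega) (by omega) (by omega)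
      have hz : fb a (c) (r+a+2) = 1 := fb_eq1 (by omega) (by omega) (by omega)
      have ht : fb a (c+1) (r) = 0 := fb_eq0 (by omega) (by omega)
      rw [hx, hy, hz, ht]
      exact mex_triple ⟨by omega, by omega, by omega⟩ (by omega) (by omega) (by omega) (by omega)
    · -- hc2 false
      have hx : fb a (c) (r+3*a+2) = 3 := fb_eq3 (by omega) (by omega) (by omega)
      have hy : fb a (c) (r+2*a+1) = 2 := fb_eq2 (by omega) (by omega) (by omega)
      have hz : fb a (c) (r+a+2) = 1 := fb_eq1 (by omega) (by omega) (by omega)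
      have ht : fb a (c+1) (r) = (r) % 2 := fb_eq5 (by omega) (by omega) (by omega) (by omega) (by omega)
      rw [hx, hy, hz, ht]
      exact mex_triple ⟨by omega, by omega, by omega⟩ (by omega) (by omega) (by omega) (by omega)
  · -- hc1 false
    by_cases hc3 : 2*(c)+3 ≤ a ∧ (r+3*a+2) = 4*a+1
    · -- hc3 true
      have hx : fb a (c) (r+3*a+2) = 2 := fb_eq4 (by omega) (by omega)
      have hy : fb a (c) (r+2*a+1) = (r+2*a+1) % 2 := fb_eq5 (by omega) (by omega) (by omega) (by omega) (by omega)
      have hz : fb a (c) (r+a+2) = 2 := fb_eq2 (by omega) (by omega) (by omega)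
      have ht : fb a (c+1) (r) = (r) % 2 := fb_eq5 (by omega) (by omega) (by omega) (by omega) (by omega)
      rw [hx, hy, hz, ht]
      exact mex_triple ⟨by omega, by omega, by omega⟩ (by omega) (by omega) (by omega) (by omega)
    · -- hc3 false
      by_cases hc4 : 2*(c)+3 ≤ a ∧ 2*a+1 ≤ (r+2*a+1) ∧ (r+2*a+1) < 3*a - 2*(c)
      · -- hc4 true
        have hx : fb a (c) (r+3*a+2) = (r+3*a+2) % 2 := fb_eq5 (by omega) (by omega) (by omega) (by omega) (by omega)
        have hy : fb a (c) (r+2*a+1) = 2 := fb_eq2 (by omega) (by omega) (by omega)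
        have hz : fb a (c) (r+a+2) = (r+a+2) % 2 := fb_eq5 (by omega) (by omega) (by omega) (by omega) (by omega)
        have ht : fb a (c+1) (r) = (r) % 2 := fb_eq5 (by omega) (by omega) (by omega) (by omega) (by omega)
        rw [hx, hy, hz, ht]
        exact mex_triple ⟨by omega, by omega, by omega⟩ (by omega) (by omega) (by omega) (by omega)
      · -- hc4 false
        have hx : fb a (c) (r+3*a+2) = (r+3*a+2) % 2 := fb_eq5 (by omega) (by omega) (by omega) (by omega) (by omega)
        have hy : fb a (c) (r+2*a+1) = (r+2*a+1) % 2 := fb_eq5 (by omega) (by omega) (by omega) (by omega) (by omega)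
        have hz : fb a (c) (r+a+2) = (r+a+2) % 2 := fb_eq5 (by omega) (by omega) (by omega) (by omega) (by omega)
        have ht : fb a (c+1) (r) = (r) % 2 := fb_eq5 (by omega) (by omega) (by omega) (by omega) (by omega)
        rw [hx, hy, hz, ht]
        exact mex_triple ⟨by omega, by omega, by omega⟩ (by omega) (by omega) (by omega) (by omega)

lemma step2 (a c r : ℕ) (ha : 5 ≤ a) (hodd : a % 2 = 1)
    (h1 : a ≤ r) (h2 : r ≤ 2*a) :
    mex ({fb a (c+1) (r-a), fb a (c) (r+2*a+1), fb a (c) (r+a+2)} : Set ℕ) = fb a (c+1) (r) := by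
  by_cases hc5 : 2*(c+1)+3 ≤ a ∧ (r-a) < a - 2*(c+1)
  · -- hc5 true
    have hx : fb a (c+1) (r-a) = 0 := fb_eq0 (by omega) (by omega)
    have hy : fb a (c) (r+2*a+1) = 3 := fb_eq3 (by omega) (by omega) (by omega)
    have hz : fb a (c) (r+a+2) = 2 := fb_eq2 (by omega) (by omega) (by omega)
    have ht : fb a (c+1) (r) = 1 := fb_eq1 (by omega) (by omega) (by omega)
    rw [hx, hy, hz, ht]
    exact mex_triple ⟨by omega, by omega, by omega⟩ (by omega) (by omega) (by omega) (by omega)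
  · -- hc5 false
    by_cases hc6 : 2*(c+1)+3 ≤ a ∧ a ≤ (r-a) ∧ (r-a) < 2*a - 2*(c+1)
    · -- hc6 true
      have hx : fb a (c+1) (r-a) = 1 := fb_eq1 (by omega) (by omega) (by omega)
      have hy : fb a (c) (r+2*a+1) = 2 := fb_eq4 (by omega) (by omega)
      have hz : fb a (c) (r+a+2) = 3 := fb_eq3 (by omega) (by omega) (by omega)
      have ht : fb a (c+1) (r) = (r) % 2 := fb_eq5 (by omega) (by omega) (by omega) (by omega) (by omega)
      rw [hx, hy, hz, ht]
      exact mex_triple ⟨by omega, by omega, by omega⟩ (by omega) (by omega) (by omega) (by omega)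
    · -- hc6 false
      by_cases hc7 : 2*(c)+3 ≤ a ∧ 3*a+1 ≤ (r+2*a+1) ∧ (r+2*a+1) < 4*a - 2*(c)
      · -- hc7 true
        by_cases hc8 : 2*(c)+3 ≤ a ∧ 2*a+1 ≤ (r+a+2) ∧ (r+a+2) < 3*a - 2*(c)
        · -- hc8 true
          have hx : fb a (c+1) (r-a) = (r-a) % 2 := fb_eq5 (by omega) (by omega) (by omega) (by omega) (by omega)
          have hy : fb a (c) (r+2*a+1) = 3 := fb_eq3 (by omega) (by omega) (by omega)
          have hz : fb a (c) (r+a+2) = 2 := fb_eq2 (by omega) (by omega) (by omega)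
          have ht : fb a (c+1) (r) = (r) % 2 := fb_eq5 (by omega) (by omega) (by omega) (by omega) (by omega)
          rw [hx, hy, hz, ht]
          exact mex_triple ⟨by omega, by omega, by omega⟩ (by omega) (by omega) (by omega) (by omega)
        · -- hc8 false
          have hx : fb a (c+1) (r-a) = (r-a) % 2 := fb_eq5 (by omega) (by omega) (by omega) (by omega) (by omega)
          have hy : fb a (c) (r+2*a+1) = 3 := fb_eq3 (by omega) (by omega) (by omega)
          have hz : fb a (c) (r+a+2) = (r+a+2) % 2 := fb_eq5 (by omega) (by omega) (by omega) (by omega) (by omega)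
          have ht : fb a (c+1) (r) = (r) % 2 := fb_eq5 (by omega) (by omega) (by omega) (by omega) (by omega)
          rw [hx, hy, hz, ht]
          exact mex_triple ⟨by omega, by omega, by omega⟩ (by omega) (by omega) (by omega) (by omega)
      · -- hc7 false
        by_cases hc9 : 2*(c)+3 ≤ a ∧ (r+2*a+1) = 4*a+1
        · -- hc9 true
          have hx : fb a (c+1) (r-a) = (r-a) % 2 := fb_eq5 (by omega) (by omega) (by omega) (by omega) (by omega)
          have hy : fb a (c) (r+2*a+1) = 2 := fb_eq4 (by omega) (by omega)
          have hz : fb a (c) (r+a+2) = 3 := fb_eq3 (by omega) (by omega) (by omega)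
          have ht : fb a (c+1) (r) = (r) % 2 := fb_eq5 (by omega) (by omega) (by omega) (by omega) (by omega)
          rw [hx, hy, hz, ht]
          exact mex_triple ⟨by omega, by omega, by omega⟩ (by omega) (by omega) (by omega) (by omega)
        · -- hc9 false
          by_cases hc10 : 2*(c)+3 ≤ a ∧ 3*a+1 ≤ (r+a+2) ∧ (r+a+2) < 4*a - 2*(c)
          · -- hc10 true
            have hx : fb a (c+1) (r-a) = (r-a) % 2 := fb_eq5 (by omega) (by omega) (by omega) (by omega) (by omega)
            have hy : fb a (c) (r+2*a+1) = (r+2*a+1) % 2 := fb_eq5 (by omega) (by omega) (by omega) (by omega) (by omega)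
            have hz : fb a (c) (r+a+2) = 3 := fb_eq3 (by omega) (by omega) (by omega)
            have ht : fb a (c+1) (r) = (r) % 2 := fb_eq5 (by omega) (by omega) (by omega) (by omega) (by omega)
            rw [hx, hy, hz, ht]
            exact mex_triple ⟨by omega, by omega, by omega⟩ (by omega) (by omega) (by omega) (by omega)
          · -- hc10 false
            have hx : fb a (c+1) (r-a) = (r-a) % 2 := fb_eq5 (by omega) (by omega) (by omega) (by omega) (by omega)
            have hy : fb a (c) (r+2*a+1) = (r+2*a+1) % 2 := fb_eq5 (by omega) (by omega) (by omega) (by omega) (by omega)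
            have hz : fb a (c) (r+a+2) = (r+a+2) % 2 := fb_eq5 (by omega) (by omega) (by omega) (by omega) (by omega)
            have ht : fb a (c+1) (r) = (r) % 2 := fb_eq5 (by omega) (by omega) (by omega) (by omega) (by omega)
            rw [hx, hy, hz, ht]
            exact mex_triple ⟨by omega, by omega, by omega⟩ (by omega) (by omega) (by omega) (by omega)

lemma step3 (a c r : ℕ) (ha : 5 ≤ a) (hodd : a % 2 = 1)
    (h1 : 2*a+1 ≤ r) (h2 : r < 3*a) :
    mex ({fb a (c+1) (r-a), fb a (c+1) (r-(2*a+1)), fb a (c) (r+a+2)} : Set ℕ) = fb a (c+1) (r) := by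
  by_cases hc11 : 2*(c+1)+3 ≤ a ∧ a ≤ (r-a) ∧ (r-a) < 2*a - 2*(c+1)
  · -- hc11 true
    have hx : fb a (c+1) (r-a) = 1 := fb_eq1 (by omega) (by omega) (by omega)
    have hy : fb a (c+1) (r-(2*a+1)) = 0 := fb_eq0 (by omega) (by omega)
    have hz : fb a (c) (r+a+2) = 3 := fb_eq3 (by omega) (by omega) (by omega)
    have ht : fb a (c+1) (r) = 2 := fb_eq2 (by omega) (by omega) (by omega)
    rw [hx, hy, hz, ht]
    exact mex_triple ⟨by omega, by omega, by omega⟩ (by omega) (by omega) (by omega) (by omega)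
  · -- hc11 false
    by_cases hc12 : 2*(c+1)+3 ≤ a ∧ (r-(2*a+1)) < a - 2*(c+1)
    · -- hc12 true
      have hx : fb a (c+1) (r-a) = (r-a) % 2 := fb_eq5 (by omega) (by omega) (by omega) (by omega) (by omega)
      have hy : fb a (c+1) (r-(2*a+1)) = 0 := fb_eq0 (by omega) (by omega)
      have hz : fb a (c) (r+a+2) = (r+a+2) % 2 := fb_eq5 (by omega) (by omega) (by omega) (by omega) (by omega)
      have ht : fb a (c+1) (r) = (r) % 2 := fb_eq5 (by omega) (by omega) (by omega) (by omega) (by omega)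
      rw [hx, hy, hz, ht]
      exact mex_triple ⟨by omega, by omega, by omega⟩ (by omega) (by omega) (by omega) (by omega)
    · -- hc12 false
      by_cases hc13 : 2*(c)+3 ≤ a ∧ (r+a+2) = 4*a+1
      · -- hc13 true
        have hx : fb a (c+1) (r-a) = (r-a) % 2 := fb_eq5 (by omega) (by omega) (by omega) (by omega) (by omega)
        have hy : fb a (c+1) (r-(2*a+1)) = (r-(2*a+1)) % 2 := fb_eq5 (by omega) (by omega) (by omega) (by omega) (by omega)
        have hz : fb a (c) (r+a+2) = 2 := fb_eq4 (by omega) (by omega)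
        have ht : fb a (c+1) (r) = (r) % 2 := fb_eq5 (by omega) (by omega) (by omega) (by omega) (by omega)
        rw [hx, hy, hz, ht]
        exact mex_triple ⟨by omega, by omega, by omega⟩ (by omega) (by omega) (by omega) (by omega)
      · -- hc13 false
        have hx : fb a (c+1) (r-a) = (r-a) % 2 := fb_eq5 (by omega) (by omega) (by omega) (by omega) (by omega)
        have hy : fb a (c+1) (r-(2*a+1)) = (r-(2*a+1)) % 2 := fb_eq5 (by omega) (by omega) (by omega) (by omega) (by omega)
        have hz : fb a (c) (r+a+2) = (r+a+2) % 2 := fb_eq5 (by omega) (by omega) (by omega) (by omega) (by omega)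
        have ht : fb a (c+1) (r) = (r) % 2 := fb_eq5 (by omega) (by omega) (by omega) (by omega) (by omega)
        rw [hx, hy, hz, ht]
        exact mex_triple ⟨by omega, by omega, by omega⟩ (by omega) (by omega) (by omega) (by omega)

lemma step4 (a b r : ℕ) (ha : 5 ≤ a) (hodd : a % 2 = 1)
    (h1 : 3*a ≤ r) (h2 : r < 4*a+2) :
    mex ({fb a (b) (r-a), fb a (b) (r-(2*a+1)), fb a (b) (r-3*a)} : Set ℕ) = fb a (b) (r) := by
  by_cases hc14 : 2*(b)+3 ≤ a ∧ 2*a+1 ≤ (r-a) ∧ (r-a) < 3*a - 2*(b)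
  · -- hc14 true
    have hx : fb a (b) (r-a) = 2 := fb_eq2 (by omega) (by omega) (by omega)
    have hy : fb a (b) (r-(2*a+1)) = 1 := fb_eq1 (by omega) (by omega) (by omega)
    have hz : fb a (b) (r-3*a) = 0 := fb_eq0 (by omega) (by omega)
    have ht : fb a (b) (r) = 3 := fb_eq3 (by omega) (by omega) (by omega)
    rw [hx, hy, hz, ht]
    exact mex_triple ⟨by omega, by omega, by omega⟩ (by omega) (by omega) (by omega) (by omega)
  · -- hc14 false
    by_cases hc15 : 2*(b)+3 ≤ a ∧ 3*a+1 ≤ (r-a) ∧ (r-a) < 4*a - 2*(b)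
    · -- hc15 true
      have hx : fb a (b) (r-a) = 3 := fb_eq3 (by omega) (by omega) (by omega)
      have hy : fb a (b) (r-(2*a+1)) = (r-(2*a+1)) % 2 := fb_eq5 (by omega) (by omega) (by omega) (by omega) (by omega)
      have hz : fb a (b) (r-3*a) = 1 := fb_eq1 (by omega) (by omega) (by omega)
      have ht : fb a (b) (r) = 2 := fb_eq4 (by omega) (by omega)
      rw [hx, hy, hz, ht]
      exact mex_triple ⟨by omega, by omega, by omega⟩ (by omega) (by omega) (by omega) (by omega)
    · -- hc15 false
      by_cases hc16 : 2*(b)+3 ≤ a ∧ (r-(2*a+1)) < a - 2*(b)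
      · -- hc16 true
        have hx : fb a (b) (r-a) = (r-a) % 2 := fb_eq5 (by omega) (by omega) (by omega) (by omega) (by omega)
        have hy : fb a (b) (r-(2*a+1)) = 0 := fb_eq0 (by omega) (by omega)
        have hz : fb a (b) (r-3*a) = 0 := fb_eq0 (by omega) (by omega)
        have ht : fb a (b) (r) = (r) % 2 := fb_eq5 (by omega) (by omega) (by omega) (by omega) (by omega)
        rw [hx, hy, hz, ht]
        exact mex_triple ⟨by omega, by omega, by omega⟩ (by omega) (by omega) (by omega) (by omega)
      · -- hc16 false
        by_cases hc17 : 2*(b)+3 ≤ a ∧ a ≤ (r-(2*a+1)) ∧ (r-(2*a+1)) < 2*a - 2*(b)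
        · -- hc17 true
          by_cases hc18 : 2*(b)+3 ≤ a ∧ a ≤ (r-3*a) ∧ (r-3*a) < 2*a - 2*(b)
          · -- hc18 true
            have hx : fb a (b) (r-a) = (r-a) % 2 := fb_eq5 (by omega) (by omega) (by omega) (by omega) (by omega)
            have hy : fb a (b) (r-(2*a+1)) = 1 := fb_eq1 (by omega) (by omega) (by omega)
            have hz : fb a (b) (r-3*a) = 1 := fb_eq1 (by omega) (by omega) (by omega)
            have ht : fb a (b) (r) = (r) % 2 := fb_eq5 (by omega) (by omega) (by omega) (by omega) (by omega)
            rw [hx, hy, hz, ht]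
            exact mex_triple ⟨by omega, by omega, by omega⟩ (by omega) (by omega) (by omega) (by omega)
          · -- hc18 false
            have hx : fb a (b) (r-a) = (r-a) % 2 := fb_eq5 (by omega) (by omega) (by omega) (by omega) (by omega)
            have hy : fb a (b) (r-(2*a+1)) = 1 := fb_eq1 (by omega) (by omega) (by omega)
            have hz : fb a (b) (r-3*a) = (r-3*a) % 2 := fb_eq5 (by omega) (by omega) (by omega) (by omega) (by omega)
            have ht : fb a (b) (r) = (r) % 2 := fb_eq5 (by omega) (by omega) (by omega) (by omega) (by omega)
            rw [hx, hy, hz, ht]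
            exact mex_triple ⟨by omega, by omega, by omega⟩ (by omega) (by omega) (by omega) (by omega)
        · -- hc17 false
          by_cases hc19 : 2*(b)+3 ≤ a ∧ (r-3*a) < a - 2*(b)
          · -- hc19 true
            have hx : fb a (b) (r-a) = (r-a) % 2 := fb_eq5 (by omega) (by omega) (by omega) (by omega) (by omega)
            have hy : fb a (b) (r-(2*a+1)) = (r-(2*a+1)) % 2 := fb_eq5 (by omega) (by omega) (by omega) (by omega) (by omega)
            have hz : fb a (b) (r-3*a) = 0 := fb_eq0 (by omega) (by omega)
            have ht : fb a (b) (r) = (r) % 2 := fb_eq5 (by omega) (by omega) (by omega) (by omega) (by omega)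
            rw [hx, hy, hz, ht]
            exact mex_triple ⟨by omega, by omega, by omega⟩ (by omega) (by omega) (by omega) (by omega)
          · -- hc19 false
            by_cases hc20 : 2*(b)+3 ≤ a ∧ a ≤ (r-3*a) ∧ (r-3*a) < 2*a - 2*(b)
            · -- hc20 true
              have hx : fb a (b) (r-a) = (r-a) % 2 := fb_eq5 (by omega) (by omega) (by omega) (by omega) (by omega)
              have hy : fb a (b) (r-(2*a+1)) = (r-(2*a+1)) % 2 := fb_eq5 (by omega) (by omega) (by omega) (by omega) (by omega)
              have hz : fb a (b) (r-3*a) = 1 := fb_eq1 (by omega) (by omega) (by omega)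
              have ht : fb a (b) (r) = (r) % 2 := fb_eq5 (by omega) (by omega) (by omega) (by omega) (by omega)
              rw [hx, hy, hz, ht]
              exact mex_triple ⟨by omega, by omega, by omega⟩ (by omega) (by omega) (by omega) (by omega)
            · -- hc20 false
              have hx : fb a (b) (r-a) = (r-a) % 2 := fb_eq5 (by omega) (by omega) (by omega) (by omega) (by omega)
              have hy : fb a (b) (r-(2*a+1)) = (r-(2*a+1)) % 2 := fb_eq5 (by omega) (by omega) (by omega) (by omega) (by omega)
              have hz : fb a (b) (r-3*a) = (r-3*a) % 2 := fb_eq5 (by omega) (by omega) (by omega) (by omega) (by omega)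
              have ht : fb a (b) (r) = (r) % 2 := fb_eq5 (by omega) (by omega) (by omega) (by omega) (by omega)
              rw [hx, hy, hz, ht]
              exact mex_triple ⟨by omega, by omega, by omega⟩ (by omega) (by omega) (by omega) (by omega)

/-- The conjectured Grundy value of `n`. -/
def fgr (a n : ℕ) : ℕ := fb a (n / (4*a+2)) (n % (4*a+2))

lemma fgr_eq (a b r n : ℕ) (h : n = (4*a+2)*b + r) (hr : r < 4*a+2) : fgr a n = fb a b r := by
  have h1 : n / (4*a+2) = b := by
    rw [h, Nat.mul_add_div (by omega), Nat.div_eq_of_lt hr, Nat.add_zero]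
  have h2 : n % (4*a+2) = r := by
    rw [h, Nat.mul_add_mod, Nat.mod_eq_of_lt hr]
  unfold fgr
  rw [h1, h2]

lemma optset0 (a : ℕ) (G : ℕ → ℕ) (n : ℕ) (hn : n < a) :
    {v | ∃ s ∈ ({a, 2*a+1, 3*a} : Finset ℕ), s ≤ n ∧ v = G (n - s)} = (∅ : Set ℕ) := by
  ext v
  simp only [Set.mem_setOf_eq, Finset.mem_insert, Finset.mem_singleton,
    Set.mem_empty_iff_false, iff_false]
  rintro ⟨s, hs, hsn, -⟩
  rcases hs with rfl | rfl | rfl <;> omega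

lemma optset1 (a : ℕ) (ha : 5 ≤ a) (G : ℕ → ℕ) (n : ℕ) (h1 : a ≤ n) (h2 : n < 2*a+1) :
    {v | ∃ s ∈ ({a, 2*a+1, 3*a} : Finset ℕ), s ≤ n ∧ v = G (n - s)} = ({G (n-a)} : Set ℕ) := by
  ext v
  simp only [Set.mem_setOf_eq, Finset.mem_insert, Finset.mem_singleton, Set.mem_singleton_iff]
  constructor
  · rintro ⟨s, hs, hsn, rfl⟩
    rcases hs with rfl | rfl | rfl
    · rfl
    · omega
    · omega
  · rintro rfl
    exact ⟨a, Or.inl rfl, h1, rfl⟩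

lemma optset2 (a : ℕ) (ha : 5 ≤ a) (G : ℕ → ℕ) (n : ℕ) (h1 : 2*a+1 ≤ n) (h2 : n < 3*a) :
    {v | ∃ s ∈ ({a, 2*a+1, 3*a} : Finset ℕ), s ≤ n ∧ v = G (n - s)} =
      ({G (n-a), G (n-(2*a+1))} : Set ℕ) := by
  ext v
  simp only [Set.mem_setOf_eq, Finset.mem_insert, Finset.mem_singleton, Set.mem_insert_iff,
    Set.mem_singleton_iff]
  constructor
  · rintro ⟨s, hs, hsn, rfl⟩
    rcases hs with rfl | rfl | rfl
    · exact Or.inl rfl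
    · exact Or.inr rfl
    · omega
  · rintro (rfl | rfl)
    · exact ⟨a, Or.inl rfl, by omega, rfl⟩
    · exact ⟨2*a+1, Or.inr (Or.inl rfl), h1, rfl⟩

lemma optset3 (a : ℕ) (ha : 5 ≤ a) (G : ℕ → ℕ) (n : ℕ) (hn : 3*a ≤ n) :
    {v | ∃ s ∈ ({a, 2*a+1, 3*a} : Finset ℕ), s ≤ n ∧ v = G (n - s)} =
      ({G (n-a), G (n-(2*a+1)), G (n-3*a)} : Set ℕ) := by
  ext v
  simp only [Set.mem_setOf_eq, Finset.mem_insert, Finset.mem_singleton, Set.mem_insert_iff,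
    Set.mem_singleton_iff]
  constructor
  · rintro ⟨s, hs, hsn, rfl⟩
    rcases hs with rfl | rfl | rfl
    · exact Or.inl rfl
    · exact Or.inr (Or.inl rfl)
    · exact Or.inr (Or.inr rfl)
  · rintro (rfl | rfl | rfl)
    · exact ⟨a, Or.inl rfl, by omega, rfl⟩
    · exact ⟨2*a+1, Or.inr (Or.inl rfl), by omega, rfl⟩
    · exact ⟨3*a, Or.inr (Or.inr rfl), hn, rfl⟩

lemma grundy_eq (a : ℕ) (ha : 5 ≤ a) (hodd : a % 2 = 1) (G : ℕ → ℕ)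
    (hG : IsGrundy {a, 2*a+1, 3*a} G) : ∀ n, G n = fgr a n := by
  have hG' : ∀ n, G n = mex {v | ∃ s ∈ ({a, 2*a+1, 3*a} : Finset ℕ), s ≤ n ∧ v = G (n - s)} := hG
  intro n
  induction n using Nat.strong_induction_on with
  | _ n IH =>
  rcases lt_or_ge n a with h1 | h1
  · -- no moves available
    rw [hG' n, optset0 a G n h1, fgr_eq a 0 n n (by ring) (by omega)]
    have ht : fb a 0 n = 0 := fb_eq0 (by omega) (by omega)
    rw [ht]
    exact mex_eq (by simp) (fun m hm => absurd hm (Nat.not_lt_zero m))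
  · rcases lt_or_ge n (2*a+1) with h2 | h2
    · -- only the move a
      rw [hG' n, optset1 a ha G n h1 h2, IH (n-a) (by omega),
        fgr_eq a 0 (n-a) (n-a) (by ring) (by omega), fgr_eq a 0 n n (by ring) (by omega)]
      rcases lt_or_ge n (2*a) with h3 | h3
      · have hx : fb a 0 (n-a) = 0 := fb_eq0 (by omega) (by omega)
        have ht : fb a 0 n = 1 := fb_eq1 (by omega) (by omega) (by omega)
        rw [hx, ht]
        exact mex_single (by omega) (by omega) (by omega)
      · -- n = 2a
        have hx : fb a 0 (n-a) = 1 := fb_eq1 (by omega) (by omega) (by omega)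
        have ht : fb a 0 n = n % 2 := by
          apply fb_eq5 <;> omega
        rw [hx, ht]
        exact mex_single (by omega) (by omega) (by omega)
    · rcases lt_or_ge n (3*a) with h3 | h3
      · -- moves a and 2a+1
        rw [hG' n, optset2 a ha G n h2 h3, IH (n-a) (by omega), IH (n-(2*a+1)) (by omega),
          fgr_eq a 0 (n-a) (n-a) (by ring) (by omega),
          fgr_eq a 0 (n-(2*a+1)) (n-(2*a+1)) (by ring) (by omega),
          fgr_eq a 0 n n (by ring) (by omega)]
        have hx : fb a 0 (n-a) = 1 := fb_eq1 (by omega) (by omega) (by omega)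
        have hy : fb a 0 (n-(2*a+1)) = 0 := fb_eq0 (by omega) (by omega)
        have ht : fb a 0 n = 2 := fb_eq2 (by omega) (by omega) (by omega)
        rw [hx, hy, ht]
        exact mex_pair ⟨by omega, by omega⟩ (by omega) (by omega) (by omega)
      · -- all three moves available
        rw [hG' n, optset3 a ha G n h3, IH (n-a) (by omega), IH (n-(2*a+1)) (by omega),
          IH (n-3*a) (by omega)]
        obtain ⟨b, r, hr, hn⟩ : ∃ b r, r < 4*a+2 ∧ n = (4*a+2)*b + r :=
          ⟨n / (4*a+2), n % (4*a+2), Nat.mod_lt _ (by omega),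
            (Nat.div_add_mod n (4*a+2)).symm⟩
        rw [fgr_eq a b r n hn hr]
        rcases lt_or_ge r (3*a) with hr3 | hr3
        · -- r < 3a forces b ≥ 1
          have hb : b ≠ 0 := by
            intro h0
            rw [h0, Nat.mul_zero, Nat.zero_add] at hn
            omega
          obtain ⟨c, hc⟩ : ∃ c, b = c + 1 := ⟨b - 1, by omega⟩
          have hmul : (4*a+2)*b = (4*a+2)*c + (4*a+2) := by rw [hc]; ring
          have hmul2 : (4*a+2)*(c+1) = (4*a+2)*c + (4*a+2) := by ring
          rcases lt_or_ge r a with hra | hra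
          · rw [fgr_eq a c (r+3*a+2) (n-a)
                (by rw [hn, hmul]; generalize (4*a+2)*c = s; omega) (by omega),
              fgr_eq a c (r+2*a+1) (n-(2*a+1))
                (by rw [hn, hmul]; generalize (4*a+2)*c = s; omega) (by omega),
              fgr_eq a c (r+a+2) (n-3*a)
                (by rw [hn, hmul]; generalize (4*a+2)*c = s; omega) (by omega), hc]
            exact step1 a c r ha hodd hra
          · rcases lt_or_ge r (2*a+1) with hrb | hrb
            · rw [fgr_eq a (c+1) (r-a) (n-a)
                  (by rw [hn, hmul, hmul2]; generalize (4*a+2)*c = s; omega) (by omega),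
                fgr_eq a c (r+2*a+1) (n-(2*a+1))
                  (by rw [hn, hmul]; generalize (4*a+2)*c = s; omega) (by omega),
                fgr_eq a c (r+a+2) (n-3*a)
                  (by rw [hn, hmul]; generalize (4*a+2)*c = s; omega) (by omega), hc]
              exact step2 a c r ha hodd hra (by omega)
            · rw [fgr_eq a (c+1) (r-a) (n-a)
                  (by rw [hn, hmul, hmul2]; generalize (4*a+2)*c = s; omega) (by omega),
                fgr_eq a (c+1) (r-(2*a+1)) (n-(2*a+1))
                  (by rw [hn, hmul, hmul2]; generalize (4*a+2)*c = s; omega) (by omega),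
                fgr_eq a c (r+a+2) (n-3*a)
                  (by rw [hn, hmul]; generalize (4*a+2)*c = s; omega) (by omega), hc]
              exact step3 a c r ha hodd hrb hr3
        · -- r ≥ 3a : all moves stay in the same block
          rw [fgr_eq a b (r-a) (n-a)
              (by rw [hn]; generalize (4*a+2)*b = s; omega) (by omega),
            fgr_eq a b (r-(2*a+1)) (n-(2*a+1))
              (by rw [hn]; generalize (4*a+2)*b = s; omega) (by omega),
            fgr_eq a b (r-3*a) (n-3*a)
              (by rw [hn]; generalize (4*a+2)*b = s; omega) (by omega)]
          exact step4 a b r ha hodd hr3 hr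

theorem stmt_15 (a : ℕ) (ha : 5 ≤ a) (haodd : Odd a) (G : ℕ → ℕ)
    (hG : IsGrundy {a, 2 * a + 1, 3 * a} G) :
    ∃ N ε : ℕ, ε ≤ 1 ∧ ∀ n, N ≤ n → G n = (n + ε) % 2 := by
  have hodd : a % 2 = 1 := Nat.odd_iff.mp haodd
  have hall := grundy_eq a ha hodd G hG
  refine ⟨a * (4*a+2), 0, by omega, ?_⟩
  intro n hn
  rw [hall n]
  obtain ⟨b, r, hr, hneq⟩ : ∃ b r, r < 4*a+2 ∧ n = (4*a+2)*b + r :=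
    ⟨n / (4*a+2), n % (4*a+2), Nat.mod_lt _ (by omega), (Nat.div_add_mod n (4*a+2)).symm⟩
  rw [fgr_eq a b r n hneq hr]
  have hab : a ≤ b := by
    by_contra hab
    push_neg at hab
    have hlt : n < a * (4*a+2) := by
      calc n = (4*a+2)*b + r := hneq
        _ < (4*a+2)*b + (4*a+2) := by omega
        _ = (4*a+2)*(b+1) := (Nat.mul_succ _ _).symm
        _ ≤ (4*a+2)*a := Nat.mul_le_mul_left _ (show b+1 ≤ a from hab)
        _ = a * (4*a+2) := Nat.mul_comm _ _
    exact absurd hn (Nat.not_le.mpr hlt)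
  have ht : fb a b r = r % 2 := by
    apply fb_eq5 <;> omega
  rw [ht]
  obtain ⟨k, hk⟩ : ∃ k, (4*a+2)*b = 2*k := ⟨(2*a+1)*b, by ring⟩
  rw [hk] at hneq
  omega
end

section
/- Let S be a finite nonempty set of positive integers with Grundy sequence G, and suppose the game is ultimately bipartite, i.e., there exist M and ε ∈ {0, 1} with G(n) = (n + ε) mod 2 for all n ≥ M. Let n₀ be the least natural number N such that G(n + 2) = G(n) for all n ≥ N, and suppose n₀ > 0. Then G(n₀) = 0, G(n₀ − 1) ≥ 2, G(n₀ − 2) = 0, and G(n₀ − 1 − max S) = 1 (these indices are nonnegative, since n₀ ≥ min S + max S). -/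
private lemma mex_eq_zero' {X : Set ℕ} (h : 0 ∉ X) : mex X = 0 :=
  Nat.sInf_eq_zero.mpr (Or.inl h)

private lemma mex_notMem' {X : Set ℕ} (h : {m | m ∉ X}.Nonempty) : mex X ∉ X :=
  Nat.sInf_mem h

private lemma mem_of_lt_mex' {X : Set ℕ} {v : ℕ} (h : v < mex X) : v ∈ X := by
  by_contra hv
  exact absurd (Nat.sInf_le (show v ∈ {m | m ∉ X} from hv)) (not_le.mpr h)

private lemma mex_eq_one' {X : Set ℕ} (h0 : 0 ∈ X) (h1 : 1 ∉ X) : mex X = 1 := by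
  have hle : mex X ≤ 1 := Nat.sInf_le (show (1:ℕ) ∈ {m | m ∉ X} from h1)
  have hne : mex X ≠ 0 := by
    intro h
    rcases Nat.sInf_eq_zero.mp h with h' | h'
    · exact h' h0
    · have : (1:ℕ) ∈ {m | m ∉ X} := h1
      rw [h'] at this
      exact this
  omega

theorem stmt_18 (S : Finset ℕ) (hS : S.Nonempty) (hpos : ∀ s ∈ S, 0 < s)
    (G : ℕ → ℕ) (hG : IsGrundy S G)
    (hbip : ∃ M ε : ℕ, ε ≤ 1 ∧ ∀ n, M ≤ n → G n = (n + ε) % 2)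
    (n₀ : ℕ) (hn₀ : IsLeast {N : ℕ | ∀ n, N ≤ n → G (n + 2) = G n} n₀)
    (hn₀pos : 0 < n₀) :
    G n₀ = 0 ∧ 2 ≤ G (n₀ - 1) ∧ G (n₀ - 2) = 0 ∧
      G (n₀ - 1 - S.max' hS) = 1 := by
  classical
  obtain ⟨M, ε, hε, hM⟩ := hbip
  set smin := S.min' hS with hsmin_def
  set s1 := S.max' hS with hs1_def
  have hsminS : smin ∈ S := S.min'_mem hS
  have hs1S : s1 ∈ S := S.max'_mem hS
  have hsmin_le : ∀ s ∈ S, smin ≤ s := fun s hs => S.min'_le s hs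
  have hle_s1 : ∀ s ∈ S, s ≤ s1 := fun s hs => S.le_max' s hs
  have hsmin_pos : 0 < smin := hpos smin hsminS
  -- basic mex facts for the Grundy recursion
  have hCN : ∀ n : ℕ, {m | m ∉ {v | ∃ s ∈ S, s ≤ n ∧ v = G (n - s)}}.Nonempty := by
    intro n
    set T : Finset ℕ := (S.filter (· ≤ n)).image (fun s => G (n - s)) with hT
    refine ⟨T.sup id + 1, ?_⟩
    rintro ⟨s, hs, hsn, hv⟩
    have hmem : G (n - s) ∈ T := by
      apply Finset.mem_image.mpr
      exact ⟨s, Finset.mem_filter.mpr ⟨hs, hsn⟩, rfl⟩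
    have := Finset.le_sup (f := id) hmem
    simp only [id] at this
    omega
  have opt_ne : ∀ n s, s ∈ S → s ≤ n → G (n - s) ≠ G n := by
    intro n s hs hsn h
    have hmem : G n ∈ {v | ∃ s ∈ S, s ≤ n ∧ v = G (n - s)} := ⟨s, hs, hsn, h.symm⟩
    have := mex_notMem' (hCN n)
    rw [← hG n] at this
    exact this hmem
  have exists_opt : ∀ n v, v < G n → ∃ s ∈ S, s ≤ n ∧ G (n - s) = v := by
    intro n v hv
    rw [hG n] at hv
    obtain ⟨s, hs, hsn, h⟩ := mem_of_lt_mex' hv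
    exact ⟨s, hs, hsn, h.symm⟩
  have zero_lt : ∀ n, n < smin → G n = 0 := by
    intro n hn
    rw [hG n]
    apply mex_eq_zero'
    rintro ⟨s, hs, hsn, -⟩
    exact absurd hsn (by have := hsmin_le s hs; omega)
  -- all elements of S are odd
  have hodd : ∀ s ∈ S, s % 2 = 1 := by
    intro s hs
    set n := 2 * (M + s) + ε with hn
    have hGn : G n = 0 := by
      rw [hM n (by omega)]; omega
    have h1 : G (n - s) ≠ G n := opt_ne n s hs (by omega)
    have h2 : G (n - s) = (n - s + ε) % 2 := hM (n - s) (by omega)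
    rw [hGn, h2] at h1
    omega
  -- 1 ∉ S (otherwise G n = n % 2 and n₀ = 0)
  have h1S : 1 ∉ S := by
    intro h1
    have hGpar : ∀ n, G n = n % 2 := by
      intro n
      induction n using Nat.strong_induction_on with
      | _ n IH =>
        rw [hG n]
        rcases Nat.eq_zero_or_pos n with h0 | hpos'
        · subst h0
          have : (0:ℕ) ∉ {v | ∃ s ∈ S, s ≤ 0 ∧ v = G (0 - s)} := by
            rintro ⟨s, hs, hsn, -⟩
            have := hpos s hs; omega
          rw [mex_eq_zero' this]
        · rcases Nat.mod_two_eq_zero_or_one n with hpar | hpar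
          · rw [hpar]
            apply mex_eq_zero'
            rintro ⟨s, hs, hsn, hv⟩
            have hps : s % 2 = 1 := hodd s hs
            have : G (n - s) = (n - s) % 2 := IH (n - s) (by have := hpos s hs; omega)
            rw [this] at hv
            omega
          · rw [hpar]
            apply mex_eq_one'
            · refine ⟨1, h1, by omega, ?_⟩
              have : G (n - 1) = (n - 1) % 2 := IH (n - 1) (by omega)
              rw [this]; omega
            · rintro ⟨s, hs, hsn, hv⟩
              have hps : s % 2 = 1 := hodd s hs
              have : G (n - s) = (n - s) % 2 := IH (n - s) (by have := hpos s hs; omega)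
              rw [this] at hv
              omega
    have hmem : 0 ∈ {N : ℕ | ∀ n, N ≤ n → G (n + 2) = G n} := by
      intro n _
      rw [hGpar, hGpar]; omega
    have := hn₀.2 hmem
    omega
  have hsmin3 : 3 ≤ smin := by
    have h2 : smin ≠ 1 := fun h => h1S (h ▸ hsminS)
    have := hodd smin hsminS
    omega
  -- the eventual pattern holds from n₀ on
  have hper : ∀ n, n₀ ≤ n → G (n + 2) = G n := hn₀.1
  have hstep : ∀ k n, n₀ ≤ n → G (n + 2 * k) = G n := by
    intro k
    induction k with
    | zero => intro n _; norm_num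
    | succ k IH =>
      intro n hn
      have h1 : n + 2 * (k + 1) = (n + 2 * k) + 2 := by ring
      rw [h1, hper (n + 2 * k) (by omega), IH n hn]
  have hpat : ∀ n, n₀ ≤ n → G n = (n + ε) % 2 := by
    intro n hn
    have h1 : G (n + 2 * M) = G n := hstep M n hn
    have h2 : G (n + 2 * M) = (n + 2 * M + ε) % 2 := hM _ (by omega)
    rw [h2] at h1
    omega
  -- Key universal lemma: G b = 0 → G (b + smin) = 1
  have lemA : ∀ n b, b + smin = n → G b = 0 → G n = 1 := by
    intro n
    induction n using Nat.strong_induction_on with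
    | _ n IH =>
      intro b hbn hb
      rw [hG n]
      apply mex_eq_one'
      · refine ⟨smin, hsminS, by omega, ?_⟩
        have : n - smin = b := by omega
        rw [this, hb]
      · rintro ⟨t, htS, htn, hv⟩
        -- hv : 1 = G (n - t)
        have htmin : smin ≤ t := hsmin_le t htS
        rcases eq_or_lt_of_le htmin with heq | hlt
        · have : n - t = b := by omega
          rw [this, hb] at hv
          exact absurd hv.symm (by omega)
        · -- t > smin
          rcases Nat.lt_or_ge (n - t) smin with hβ | hβ
          · have := zero_lt (n - t) hβ
            rw [this] at hv
            exact absurd hv.symm (by omega)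
          · have htb : t ≤ b := by omega
            have h1 : G (b - t) ≠ G b := opt_ne b t htS htb
            rw [hb] at h1
            have h2 : 0 < G (b - t) := Nat.pos_of_ne_zero h1
            obtain ⟨s', hs'S, hs'le, hG0⟩ := exists_opt (b - t) 0 h2
            have hIH : G ((b - t - s') + smin) = 1 :=
              IH ((b - t - s') + smin) (by omega) (b - t - s') rfl hG0
            have hs'β : s' ≤ n - t := by omega
            have h3 : G ((n - t) - s') ≠ G (n - t) := opt_ne (n - t) s' hs'S hs'β
            have h4 : (n - t) - s' = (b - t - s') + smin := by omega
            rw [h4, hIH, ← hv] at h3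
            exact h3 rfl
  -- x := greatest "black" (parity 1 relative to ε) zero below n₀
  set Pb : ℕ → Prop := fun m => G m = 0 ∧ (m + ε) % 2 = 1 with hPb
  set x := Nat.findGreatest Pb n₀ with hxdef
  have hr : Pb ((1 + ε) % 2) := by
    constructor
    · exact zero_lt _ (by omega)
    · omega
  have hxP : Pb x := Nat.findGreatest_spec (m := (1 + ε) % 2) (by omega) hr
  have hxmax : ∀ m, x < m → (m + ε) % 2 = 1 → G m ≠ 0 := by
    intro m hm hpar hG0
    rcases le_or_gt m n₀ with hle | hlt
    · exact Nat.findGreatest_is_greatest hm hle ⟨hG0, hpar⟩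
    · have := hpat m (by omega)
      rw [hG0] at this
      omega
  -- w := greatest "white" one below n₀
  have hGw0 : G (x + smin) = 1 := lemA (x + smin) x rfl hxP.1
  have hparw0 : (x + smin + ε) % 2 = 0 := by
    have h1 := hxP.2
    have h2 := hodd smin hsminS
    omega
  have hw0lt : x + smin < n₀ := by
    by_contra h
    have := hpat (x + smin) (by omega)
    rw [hGw0] at this
    omega
  set Pw : ℕ → Prop := fun m => G m = 1 ∧ (m + ε) % 2 = 0 with hPw
  set w := Nat.findGreatest Pw n₀ with hwdef
  have hwP : Pw w := Nat.findGreatest_spec (m := x + smin) (by omega) ⟨hGw0, hparw0⟩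
  have hww0 : x + smin ≤ w := Nat.le_findGreatest (by omega) ⟨hGw0, hparw0⟩
  have hwmax : ∀ m, w < m → (m + ε) % 2 = 0 → G m ≠ 1 := by
    intro m hm hpar hG1
    rcases le_or_gt m n₀ with hle | hlt
    · exact Nat.findGreatest_is_greatest hm hle ⟨hG1, hpar⟩
    · have := hpat m (by omega)
      rw [hG1] at this
      omega
  have hs1min : smin ≤ s1 := hsmin_le s1 hs1S
  have hs1odd : s1 % 2 = 1 := hodd s1 hs1S
  -- auto-zero: every white position above x + s1 is a zero
  have hAZ : ∀ m, (m + ε) % 2 = 0 → x + s1 < m → G m = 0 := by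
    intro m hpar hm
    rw [hG m]
    apply mex_eq_zero'
    rintro ⟨s, hs, hsn, hv⟩
    have hso : s % 2 = 1 := hodd s hs
    have hpar' : (m - s + ε) % 2 = 1 := by omega
    have hxm : x < m - s := by
      have := hle_s1 s hs; omega
    exact hxmax (m - s) hxm hpar' hv.symm
  -- auto-one: every black position above w + s1 is a one
  have hAO : ∀ m, (m + ε) % 2 = 1 → w + s1 < m → G m = 1 := by
    intro m hpar hm
    rcases le_or_gt n₀ m with hle | hlt
    · rw [hpat m hle]; omega
    · rw [hG m]
      apply mex_eq_one'
      · by_contra h0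
        have : G m = 0 := by rw [hG m]; exact mex_eq_zero' h0
        exact hxmax m (by omega) hpar this
      · rintro ⟨s, hs, hsn, hv⟩
        have hso : s % 2 = 1 := hodd s hs
        have hpar' : (m - s + ε) % 2 = 0 := by omega
        have hwm : w < m - s := by
          have := hle_s1 s hs; omega
        exact hwmax (m - s) hwm hpar' hv.symm
  -- the pattern holds everywhere above w + s1
  have hPAT : ∀ m, w + s1 < m → G m = (m + ε) % 2 := by
    intro m hm
    rcases Nat.mod_two_eq_zero_or_one (m + ε) with hpar | hpar
    · rw [hAZ m hpar (by omega), hpar]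
    · rw [hAO m hpar hm, hpar]
  -- n₀ = w + s1 + 1
  have hup : n₀ ≤ w + s1 + 1 := by
    apply hn₀.2
    intro n hn
    rw [hPAT n (by omega), hPAT (n + 2) (by omega)]
    omega
  have hlow : G (w + s1) ≠ 1 := by
    intro h
    have h1 : G ((w + s1) - s1) ≠ G (w + s1) := opt_ne (w + s1) s1 hs1S (by omega)
    have h2 : (w + s1) - s1 = w := by omega
    rw [h2, hwP.1, h] at h1
    exact h1 rfl
  have hge : ¬ n₀ ≤ w + s1 := by
    intro h
    have h1 := hper (w + s1) h
    have h2 : G (w + s1 + 2) = 1 := by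
      rw [hPAT (w + s1 + 2) (by omega)]
      have := hwP.2
      omega
    rw [h2] at h1
    exact hlow h1.symm
  have hn0eq : n₀ = w + s1 + 1 := by omega
  -- conclusions
  have hparn0 : (n₀ + ε) % 2 = 0 := by
    have h1 := hwP.2
    omega
  refine ⟨?_, ?_, ?_, ?_⟩
  · rw [hpat n₀ le_rfl]; omega
  · have h1 : n₀ - 1 = w + s1 := by omega
    rw [h1]
    have h2 : G (w + s1) ≠ 0 := by
      apply hxmax (w + s1) (by omega)
      have := hwP.2
      omega
    have := hlow
    omega
  · have h1 : n₀ - 2 = w + (s1 - 1) := by omega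
    rw [h1]
    apply hAZ
    · have h2 := hwP.2
      omega
    · omega
  · have h1 : n₀ - 1 - s1 = w := by omega
    rw [h1, hwP.1]
end

section
/- Let S be a finite nonempty set of positive integers with Grundy sequence G. Suppose the game is ultimately bipartite but not bipartite: there exist M and ε ∈ {0, 1} with G(n) = (n + ε) mod 2 for all n ≥ M, but it is not the case that G(n) = n mod 2 for all n. If s is a positive integer such that G(n + s) ≠ G(n) for all n ∈ ℕ (i.e., s can be added to the subtraction set without changing the Grundy sequence), then s ≤ max S. -/
lemma mex_not_mem (X : Set ℕ) (hX : X.Finite) : mex X ∉ X :=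
  Nat.sInf_mem hX.infinite_compl.nonempty

lemma mex_le (X : Set ℕ) {q : ℕ} (hq : q ∉ X) : mex X ≤ q := Nat.sInf_le hq

theorem stmt_19 (S : Finset ℕ) (hS : S.Nonempty) (hpos : ∀ s ∈ S, 0 < s)
    (G : ℕ → ℕ) (hG : IsGrundy S G)
    (hbip : ∃ M ε : ℕ, ε ≤ 1 ∧ ∀ n, M ≤ n → G n = (n + ε) % 2)
    (hnotbip : ¬ ∀ n, G n = n % 2)
    (s : ℕ) (hs : 0 < s) (hsafe : ∀ n, G (n + s) ≠ G n) :
    s ≤ S.max' hS := by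
  classical
  obtain ⟨M, ε, hε, hM⟩ := hbip
  -- Finiteness of the mex sets
  have hVfin : ∀ n : ℕ, {v | ∃ t ∈ S, t ≤ n ∧ v = G (n - t)}.Finite := by
    intro n
    apply ((Set.finite_Iic n).image G).subset
    rintro v ⟨t, _, _, rfl⟩
    exact ⟨n - t, by simp [Set.mem_Iic], rfl⟩
  -- s is odd
  have hsodd : s % 2 = 1 := by
    have h1 := hsafe M
    rw [hM M le_rfl, hM (M + s) (by omega)] at h1
    omega
  -- G 0 = 0
  have hG0 : G 0 = 0 := by
    have h := hG 0
    have hempty : {v | ∃ t ∈ S, t ≤ 0 ∧ v = G (0 - t)} = ∅ := by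
      ext v
      simp only [Set.mem_setOf_eq, Set.mem_empty_iff_false, iff_false, not_exists]
      rintro t ⟨ht, hle, _⟩
      exact absurd hle (by have := hpos t ht; omega)
    rw [hempty] at h
    rw [h]
    exact Nat.sInf_eq_zero.mpr (Or.inl (by simp))
  -- there exists a "bad" n
  have hbad : ∃ k, G k ≠ (k + ε) % 2 := by
    by_contra hall
    push_neg at hall
    have h0 := hall 0
    rw [hG0] at h0
    have hε0 : ε = 0 := by omega
    exact hnotbip (fun n => by have := hall n; omega)
  obtain ⟨k, hk⟩ := hbad
  have hkM : k ≤ M := by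
    by_contra hkM
    exact hk (hM k (by omega))
  -- the greatest bad n
  set P : ℕ → Prop := fun n => G n ≠ (n + ε) % 2 with hP
  set n0 := Nat.findGreatest P M with hn0def
  have hk' : P k := hk
  have hn0 : P n0 := Nat.findGreatest_spec hkM hk'
  rw [hP] at hn0
  have hmax : ∀ m, n0 < m → G m = (m + ε) % 2 := by
    intro m hm
    by_cases hmM : M ≤ m
    · exact hM m hmM
    · by_contra hbadm
      exact Nat.findGreatest_is_greatest hm (by omega) hbadm
  -- suppose s > max S
  by_contra hlt
  push_neg at hlt
  have hmaxS : ∀ t ∈ S, t < s := fun t ht => lt_of_le_of_lt (S.le_max' t ht) hlt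
  -- G (n0 + s) follows parity
  have hGn0s : G (n0 + s) = (n0 + s + ε) % 2 := hmax _ (by omega)
  -- G n0 ≥ 2
  have hGn0_ge : 2 ≤ G n0 := by
    have h1 := hsafe n0
    rw [hGn0s] at h1
    omega
  -- every element of S is odd
  have hodd : ∀ t ∈ S, t % 2 = 1 := by
    intro t ht
    by_contra hte
    have hte' : t % 2 = 0 := by omega
    have hts : t < s := hmaxS t ht
    have hmem : G (n0 + s - t) ∈ {v | ∃ t ∈ S, t ≤ n0 + s ∧ v = G (n0 + s - t)} :=
      ⟨t, ht, by omega, rfl⟩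
    have hnm := mex_not_mem _ (hVfin (n0 + s))
    rw [← hG (n0 + s)] at hnm
    have hval : G (n0 + s - t) = (n0 + s - t + ε) % 2 := hmax _ (by omega)
    have : G (n0 + s - t) = G (n0 + s) := by rw [hval, hGn0s]; omega
    rw [this] at hmem
    exact hnm hmem
  -- some predecessor of n0 has value q = (n0+ε)%2
  have hqmem : (n0 + ε) % 2 ∈ {v | ∃ t ∈ S, t ≤ n0 ∧ v = G (n0 - t)} := by
    by_contra hq
    have := mex_le _ hq
    rw [← hG n0] at this
    omega
  obtain ⟨t, ht, htn0, hqeq⟩ := hqmem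
  have hts : t < s := hmaxS t ht
  have htodd : t % 2 = 1 := hodd t ht
  -- contradiction with safety at n0 - t
  have hval : G (n0 - t + s) = (n0 - t + s + ε) % 2 := hmax _ (by omega)
  have : G (n0 - t + s) = G (n0 - t) := by rw [hval, ← hqeq]; omega
  exact hsafe (n0 - t) this
end
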